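/- Let Δ be a geometric simplicial complex and ω a linear differential such that (Δ,ω) is weakly toric k-chordal for some k ≥ 0. Then for every stress γ ∈ S_{k+1}(Δ), the vertex set of the support of ωγ equals the vertex set of the support of γ, i.e. (ωγ)^(0) = γ^(0). In particular, the map ω : S_{k+1}(Δ) → S_{k}(Δ) is injective. -/

import Mathlib

open MvPolynomial

open MvPolynomial

/-- An abstract simplicial complex on the vertex set `Fin n`:
a collection of finite subsets closed under taking subsets. -/
def IsComplex {n : ℕ} (Δ : Set (Finset (Fin n))) : Prop :=
  ∀ σ ∈ Δ, ∀ τ ⊆ σ, τ ∈ Δ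

/-- The vertex set `Δ^(0)` of a simplicial complex. -/
def verts {n : ℕ} (Δ : Set (Finset (Fin n))) : Set (Fin n) := {v | {v} ∈ Δ}

/-- The partial derivative `∂/∂xᵢ` as a linear endomorphism of `ℝ[x₁,…,xₙ]`. -/
noncomputable def pd {n : ℕ} (i : Fin n) : Module.End ℝ (MvPolynomial (Fin n) ℝ) :=
  (pderiv i).toLinearMap

/-- The constant coefficient differential operator `(x^a)^∨ = ∏ᵢ (∂/∂xᵢ)^(aᵢ)`. -/
noncomputable def monDiff {n : ℕ} (a : Fin n →₀ ℕ) : Module.End ℝ (MvPolynomial (Fin n) ℝ) :=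
  ((List.finRange n).map fun i => pd i ^ a i).prod

/-- The stress space `S̃(Δ)`: polynomials annihilated by `q^∨` for every `q` in the
nonface ideal `I_Δ` (equivalently, by `(x^a)^∨` for every monomial generator `x^a` of `I_Δ`). -/
noncomputable def tStress {n : ℕ} (Δ : Set (Finset (Fin n))) :
    Submodule ℝ (MvPolynomial (Fin n) ℝ) :=
  ⨅ a ∈ {a : Fin n →₀ ℕ | a.support ∉ Δ}, LinearMap.ker (monDiff a)

/-- A linear differential `Σᵢ cᵢ ∂/∂xᵢ`. -/
noncomputable def linDiff {n : ℕ} (c : Fin n → ℝ) : Module.End ℝ (MvPolynomial (Fin n) ℝ) :=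
  ∑ i, c i • pd i

/-- The canonical differential `δ = Σᵢ ∂/∂xᵢ`. -/
noncomputable def canDiff (n : ℕ) : Module.End ℝ (MvPolynomial (Fin n) ℝ) :=
  linDiff fun _ => (1 : ℝ)

/-- The coordinate differential `θⱼ = Σᵢ (vᵢ)ⱼ ∂/∂xᵢ` of a geometric simplicial complex. -/
noncomputable def coordDiff {n d : ℕ} (V : Fin n → Fin d → ℝ) (j : Fin d) :
    Module.End ℝ (MvPolynomial (Fin n) ℝ) :=
  linDiff fun i => V i j

/-- The stress space `S(Δ)` of a geometric simplicial complex with vertex coordinates `V`. -/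
noncomputable def stress {n d : ℕ} (V : Fin n → Fin d → ℝ) (Δ : Set (Finset (Fin n))) :
    Submodule ℝ (MvPolynomial (Fin n) ℝ) :=
  tStress Δ ⊓ ⨅ j : Fin d, LinearMap.ker (coordDiff V j)

/-- The degree-`k` graded piece `S_k(Δ)` of the stress space. -/
noncomputable def stressK {n d : ℕ} (V : Fin n → Fin d → ℝ) (Δ : Set (Finset (Fin n)))
    (k : ℕ) : Submodule ℝ (MvPolynomial (Fin n) ℝ) :=
  stress V Δ ⊓ homogeneousSubmodule (Fin n) ℝ k

/-- A geometric simplicial complex in `ℝ^d` is proper if the coordinates of each face of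
dimension `< d` are linearly independent. -/
def IsProper {n d : ℕ} (V : Fin n → Fin d → ℝ) (Δ : Set (Finset (Fin n))) : Prop :=
  ∀ σ ∈ Δ, σ.card ≤ d → LinearIndependent ℝ (fun i : {x // x ∈ σ} => V i.1)

/-- The star of a face. -/
def cStar {n : ℕ} (Δ : Set (Finset (Fin n))) (σ : Finset (Fin n)) : Set (Finset (Fin n)) :=
  {τ ∈ Δ | σ ∪ τ ∈ Δ}

/-- The star of a vertex. -/
def vStar {n : ℕ} (Δ : Set (Finset (Fin n))) (v : Fin n) : Set (Finset (Fin n)) :=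
  cStar Δ {v}

/-- The boundary `∂St_v Δ` of the star of a vertex: faces of the star not containing `v`. -/
def vStarBd {n : ℕ} (Δ : Set (Finset (Fin n))) (v : Fin n) : Set (Finset (Fin n)) :=
  {τ ∈ vStar Δ v | v ∉ τ}

/-- The link of a face. -/
def lk {n : ℕ} (Δ : Set (Finset (Fin n))) (σ : Finset (Fin n)) : Set (Finset (Fin n)) :=
  {τ | Disjoint σ τ ∧ σ ∪ τ ∈ Δ}

/-- The vertex set `γ^(0)` of the support of a stress `γ`. -/
noncomputable def stressVerts {n : ℕ} (γ : MvPolynomial (Fin n) ℝ) : Finset (Fin n) :=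
  γ.support.biUnion fun a => a.support

/-- `g_k = dim S_k − dim S_{k−1}` (with `S_{−1} = 0`). -/
noncomputable def gnum {n d : ℕ} (V : Fin n → Fin d → ℝ) (Δ : Set (Finset (Fin n)))
    (k : ℕ) : ℤ :=
  (Module.finrank ℝ ↥(stressK V Δ k) : ℤ) -
    if k = 0 then 0 else (Module.finrank ℝ ↥(stressK V Δ (k - 1)) : ℤ)

/-- The homogenizing embedding `ℝ^d → ℝ^d × {1} ⊆ ℝ^{d+1}` applied to vertex coordinates. -/
noncomputable def homV {n d : ℕ} (p : Fin n → Fin d → ℝ) : Fin n → Fin (d + 1) → ℝ :=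
  fun i => Fin.snoc (p i) 1

/-- `Δ` is the boundary complex of the simplicial `d`-polytope `conv{p 1, …, p n}`:
the polytope is full-dimensional, every `p i` is a vertex, the faces of `Δ` are exactly the
vertex sets cut out by supporting hyperplanes, and every proper face is a simplex. -/
def IsSimplicialPolytopeBoundary {n d : ℕ} (p : Fin n → Fin d → ℝ)
    (Δ : Set (Finset (Fin n))) : Prop :=
  affineSpan ℝ (Set.range p) = ⊤ ∧
  (∀ i, p i ∉ convexHull ℝ (p '' {j | j ≠ i})) ∧
  (∀ σ ∈ Δ, AffineIndependent ℝ (fun i : {x // x ∈ σ} => p i.1)) ∧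
  (∀ σ : Finset (Fin n), σ ∈ Δ ↔
    ∃ (f : (Fin d → ℝ) →ₗ[ℝ] ℝ) (c : ℝ),
      (∃ i, f (p i) < c) ∧ (∀ i, f (p i) ≤ c) ∧ (∀ i, f (p i) = c ↔ i ∈ σ))

/-- The simplicial boundary operator (with real coefficients), on the free module spanned by
all finite subsets of `Fin n`; the empty set plays the role of the `(−1)`-face, so that the
associated homology is reduced. -/
noncomputable def bdry {n : ℕ} : (Finset (Fin n) →₀ ℝ) →ₗ[ℝ] (Finset (Fin n) →₀ ℝ) :=
  Finsupp.lsum ℝ fun σ => LinearMap.toSpanSingleton ℝ _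
    (∑ i ∈ σ, ((-1 : ℝ) ^ (σ.filter (· < i)).card) • Finsupp.single (σ.erase i) (1 : ℝ))

/-- The space of simplicial `k`-chains of `Δ` (spanned by faces of `Δ` of dimension `k`). -/
noncomputable def chains {n : ℕ} (Δ : Set (Finset (Fin n))) (k : ℤ) :
    Submodule ℝ (Finset (Fin n) →₀ ℝ) :=
  Finsupp.supported ℝ ℝ {σ | σ ∈ Δ ∧ (σ.card : ℤ) = k + 1}

/-- Reduced simplicial `k`-cycles of `Δ`. -/
noncomputable def cycles {n : ℕ} (Δ : Set (Finset (Fin n))) (k : ℤ) :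
    Submodule ℝ (Finset (Fin n) →₀ ℝ) :=
  chains Δ k ⊓ LinearMap.ker bdry

/-- Simplicial `k`-boundaries of `Δ`. -/
noncomputable def bdries {n : ℕ} (Δ : Set (Finset (Fin n))) (k : ℤ) :
    Submodule ℝ (Finset (Fin n) →₀ ℝ) :=
  Submodule.map bdry (chains Δ (k + 1))

/-- The reduced Betti number `β̃_k(Δ)` (with real coefficients). -/
noncomputable def rBetti {n : ℕ} (Δ : Set (Finset (Fin n))) (k : ℤ) : ℕ :=
  Module.finrank ℝ ↥(cycles Δ k) - Module.finrank ℝ ↥(bdries Δ k)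

/-- The induced subcomplex `Δ_W` on a vertex set `W`. -/
def induced {n : ℕ} (Δ : Set (Finset (Fin n))) (W : Finset (Fin n)) : Set (Finset (Fin n)) :=
  {σ ∈ Δ | σ ⊆ W}

/-- The vertex set of the support of a simplicial chain. -/
def chainVerts {n : ℕ} (c : Finset (Fin n) →₀ ℝ) : Finset (Fin n) :=
  c.support.biUnion id

/-- `Δ` is resolution `k`-chordal: every `k`-cycle `z` admits a resolution, i.e. a
`(k+1)`-chain `c` with `∂c = z` and `c^(0) = z^(0)`. -/
def ResolutionChordal {n : ℕ} (Δ : Set (Finset (Fin n))) (k : ℤ) : Prop :=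
  ∀ z ∈ cycles Δ k, ∃ c ∈ chains Δ (k + 1), bdry c = z ∧ chainVerts c = chainVerts z

/-- `(Δ, ω)` is toric `k`-chordal: `ω : S_{k+1}(Δ) → S_k(Δ)` is surjective and
`ω : S_k(Δ) → S_{k−1}(Δ)` is injective. -/
def ToricChordal {n d : ℕ} (V : Fin n → Fin d → ℝ) (Δ : Set (Finset (Fin n)))
    (ω : Module.End ℝ (MvPolynomial (Fin n) ℝ)) (k : ℕ) : Prop :=
  (∀ γ ∈ stressK V Δ k, ∃ γ' ∈ stressK V Δ (k + 1), ω γ' = γ) ∧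
  (∀ γ ∈ stressK V Δ k, ω γ = 0 → γ = 0)

/-- `(Δ, ω)` is weakly toric `k`-chordal: `ω : S_k(St_v Δ) → S_{k−1}(St_v Δ)` is injective
for every vertex `v` of `Δ`. -/
def WeaklyToricChordal {n d : ℕ} (V : Fin n → Fin d → ℝ) (Δ : Set (Finset (Fin n)))
    (ω : Module.End ℝ (MvPolynomial (Fin n) ℝ)) (k : ℕ) : Prop :=
  ∀ v ∈ verts Δ, ∀ γ ∈ stressK V (vStar Δ v) k, ω γ = 0 → γ = 0

/-- A missing face of `Δ`: a nonface all of whose proper subsets are faces. -/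
def IsMissingFace {n : ℕ} (Δ : Set (Finset (Fin n))) (σ : Finset (Fin n)) : Prop :=
  σ ∉ Δ ∧ ∀ τ ⊂ σ, τ ∈ Δ

/-- Representatives of relative `k`-stresses of the relative complex `(Δ', Γ)`:
homogeneous degree-`k` elements of `S̃(Δ')` whose image under each coordinate differential
lies in `S̃(Γ)`.  The relative stress space `S_k(Δ', Γ)` is the quotient of this space by
(the degree-`k` part of) `S̃(Γ)`. -/
noncomputable def relStressK {n d : ℕ} (V : Fin n → Fin d → ℝ)
    (Δ' Γ : Set (Finset (Fin n))) (k : ℕ) : Submodule ℝ (MvPolynomial (Fin n) ℝ) :=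
  tStress Δ' ⊓ homogeneousSubmodule (Fin n) ℝ k ⊓
    ⨅ j : Fin d, (tStress Γ).comap (coordDiff V j)

/-- A shelling of a pure `(d−1)`-dimensional simplicial complex: a linear order on the facets
such that the intersection of each facet with the union of all subsequent facets is a pure
`(d−2)`-dimensional complex or empty. -/
def IsShelling {n : ℕ} (Δ : Set (Finset (Fin n))) (d : ℕ) (L : List (Finset (Fin n))) : Prop :=
  L.Nodup ∧ (∀ σ, σ ∈ L ↔ σ ∈ Δ ∧ σ.card = d) ∧
  (∀ σ ∈ Δ, ∃ F ∈ L, σ ⊆ F) ∧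
  ∀ (i : ℕ) (hi : i < L.length) (τ : Finset (Fin n)), τ ⊆ L.get ⟨i, hi⟩ →
    (∃ (j : ℕ) (hj : j < L.length), i < j ∧ τ ⊆ L.get ⟨j, hj⟩) →
    ∃ ρ, τ ⊆ ρ ∧ ρ ⊆ L.get ⟨i, hi⟩ ∧ ρ.card = d - 1 ∧
      ∃ (j : ℕ) (hj : j < L.length), i < j ∧ ρ ⊆ L.get ⟨j, hj⟩

/-- The degree-`k` graded piece of the stress space `S̃(Δ)`. -/
noncomputable def tStressK {n : ℕ} (Δ : Set (Finset (Fin n))) (k : ℕ) :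
    Submodule ℝ (MvPolynomial (Fin n) ℝ) :=
  tStress Δ ⊓ homogeneousSubmodule (Fin n) ℝ k

/-- A sequence `θ` of linear differentials is regular up to degree `k` on `S̃(Δ)`: each
`θ_j` maps the degree-`(i+1)` part of the common kernel of `θ_1, …, θ_{j−1}` in `S̃(Δ)` onto
the degree-`i` part, for every `i ≤ k`. -/
def RegularUpTo {n : ℕ} (Δ : Set (Finset (Fin n)))
    (θ : List (Module.End ℝ (MvPolynomial (Fin n) ℝ))) (k : ℕ) : Prop :=
  ∀ j < θ.length, ∀ i ≤ k,
    ∀ γ ∈ tStressK Δ i ⊓ ⨅ l ∈ Finset.range j, LinearMap.ker (θ.getD l 0),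
      ∃ γ' ∈ tStressK Δ (i + 1) ⊓ ⨅ l ∈ Finset.range j, LinearMap.ker (θ.getD l 0),
        θ.getD j 0 γ' = γ

/-- `dim Δ + 1`: the maximal cardinality of a face. -/
noncomputable def dim1 {n : ℕ} (Δ : Set (Finset (Fin n))) : ℕ :=
  sSup {m | ∃ σ ∈ Δ, σ.card = m}

/-- `Δ` is Cohen–Macaulay over `ℝ`: the reduced homology of every face link vanishes below
the expected dimension. -/
def IsCM {n : ℕ} (Δ : Set (Finset (Fin n))) : Prop :=
  ∀ σ ∈ Δ, ∀ i : ℤ, i < (dim1 Δ : ℤ) - 1 - σ.card →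
    cycles (lk Δ σ) i ≤ bdries (lk Δ σ) i

/-- `(q, T)` is a triangulation of the simplicial polytope `P = conv{p i}` whose faces contained
in the boundary `∂P` form exactly the boundary complex `Δ` of `P`. -/
def IsTriangulation {n d m : ℕ} (p : Fin n → Fin d → ℝ) (Δ : Set (Finset (Fin n)))
    (q : Fin m → Fin d → ℝ) (T : Set (Finset (Fin m))) : Prop :=
  IsComplex T ∧
  (∀ σ ∈ T, AffineIndependent ℝ (fun i : {x // x ∈ σ} => q i.1)) ∧
  (∀ σ ∈ T, ∀ τ ∈ T,
    convexHull ℝ (q '' ↑σ) ∩ convexHull ℝ (q '' ↑τ) = convexHull ℝ (q '' ↑(σ ∩ τ))) ∧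
  (⋃ σ ∈ T, convexHull ℝ (q '' ↑σ)) = convexHull ℝ (Set.range p) ∧
  {s : Set (Fin d → ℝ) | ∃ σ ∈ T,
      convexHull ℝ (q '' ↑σ) ⊆ frontier (convexHull ℝ (Set.range p)) ∧ s = q '' ↑σ}
    = {s : Set (Fin d → ℝ) | ∃ σ ∈ Δ, s = p '' ↑σ}

/-- The restriction `Δ_S` of a balanced complex to the set `S` of colors. -/
def colorRestrict {n d : ℕ} (Δ : Set (Finset (Fin n))) (col : Fin n → Fin d)
    (S : Finset (Fin d)) : Set (Finset (Fin n)) :=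
  {σ ∈ Δ | ∀ v ∈ σ, col v ∈ S}

/-!
Differentiating in `x_v` turns a `(k+1)`-stress `γ` of `Δ` into a `k`-stress `∂_v γ` of the star
`St_v Δ`, because `∂_v` shifts every nonface monomial of the star to a nonface monomial of `Δ`.
In characteristic zero `v ∈ γ^(0)` exactly when `∂_v γ ≠ 0`, and `∂_v` commutes with `ω`;
so injectivity of `ω` on `S_k(St_v Δ)` gives `∂_v (ωγ) ≠ 0` whenever `∂_v γ ≠ 0`.
A homogeneous polynomial of positive degree with no variables is zero, which gives injectivity.
-/

namespace MvPolynomial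

variable {σ R : Type*} [CommSemiring R]

lemma pderiv_pderiv_comm (i j : σ) (p : MvPolynomial σ R) :
    pderiv i (pderiv j p) = pderiv j (pderiv i p) := by
  obtain rfl | hij := eq_or_ne i j
  · rfl
  ext m
  simp only [coeff_pderiv, Finsupp.add_apply, Finsupp.single_eq_of_ne' hij,
    Finsupp.single_eq_of_ne' hij.symm, add_zero, add_right_comm m]
  ring

lemma mem_vars_iff_pderiv_ne_zero [NoZeroDivisors R] [CharZero R] {p : MvPolynomial σ R}
    {i : σ} : i ∈ p.vars ↔ pderiv i p ≠ 0 := by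
  rw [mem_vars_iff_mem_support, ne_eq, MvPolynomial.ext_iff, not_forall]
  simp only [coeff_pderiv, coeff_zero, mul_eq_zero, Nat.cast_add_one_ne_zero, or_false,
    mem_support_iff, Finsupp.mem_support_iff]
  constructor
  · rintro ⟨d, hd, hi⟩
    refine ⟨d - Finsupp.single i 1, ?_⟩
    rwa [tsub_add_cancel_of_le (Finsupp.single_le_iff.mpr (Nat.one_le_iff_ne_zero.mpr hi))]
  · rintro ⟨m, hm⟩
    exact ⟨m + Finsupp.single i 1, hm, by simp⟩

lemma IsHomogeneous.eq_zero_of_vars_eq_empty {p : MvPolynomial σ R} {n : ℕ}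
    (hp : p.IsHomogeneous n) (hn : n ≠ 0) (hvars : p.vars = ∅) : p = 0 := by
  rw [vars_eq_empty_iff_eq_C.mp hvars, hp.coeff_eq_zero (by simpa using hn.symm), C_0]

end MvPolynomial

lemma stressVerts_eq_vars {n : ℕ} (γ : MvPolynomial (Fin n) ℝ) : stressVerts γ = γ.vars := by
  ext v
  simp [stressVerts, mem_vars_iff_mem_support]

section Differentials

variable {n : ℕ}

lemma commute_pd (i j : Fin n) : Commute (pd i) (pd j) :=
  LinearMap.ext fun p => pderiv_pderiv_comm i j p

lemma commute_linDiff_pd (c : Fin n → ℝ) (v : Fin n) : Commute (linDiff c) (pd v) :=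
  Commute.sum_left _ _ _ fun i _ => (commute_pd i v).smul_left (c i)

lemma commute_pd_monDiff (v : Fin n) (a : Fin n →₀ ℕ) : Commute (pd v) (monDiff a) :=
  Commute.list_prod_right _ _ fun _ hx => by
    obtain ⟨i, -, rfl⟩ := List.mem_map.mp hx
    exact (commute_pd v i).pow_right _

lemma monDiff_zero : monDiff (0 : Fin n →₀ ℕ) = 1 :=
  List.prod_eq_one fun _ hx => by
    obtain ⟨i, -, rfl⟩ := List.mem_map.mp hx
    simp

lemma list_prod_map_pd_pow_add_single (a : Fin n →₀ ℕ) (v : Fin n) {L : List (Fin n)}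
    (hL : L.Nodup) (hv : v ∈ L) :
    (L.map fun i => pd i ^ (a + Finsupp.single v 1 : Fin n →₀ ℕ) i).prod
      = pd v * (L.map fun i => pd i ^ a i).prod := by
  induction L with
  | nil => simp at hv
  | cons x t ih =>
    obtain ⟨hxt, ht⟩ := List.nodup_cons.mp hL
    simp only [List.map_cons, List.prod_cons]
    rcases List.mem_cons.mp hv with rfl | hvt
    · have hrest : (t.map fun i => pd i ^ (a + Finsupp.single v 1 : Fin n →₀ ℕ) i)
          = t.map fun i => pd i ^ a i :=
        List.map_congr_left fun i hi => by
          rw [Finsupp.add_apply, Finsupp.single_eq_of_ne' (ne_of_mem_of_not_mem hi hxt).symm,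
            add_zero]
      rw [hrest, Finsupp.add_apply, Finsupp.single_eq_same, pow_succ', mul_assoc]
    · have hxv : x ≠ v := fun h => hxt (h ▸ hvt)
      rw [ih ht hvt, Finsupp.add_apply, Finsupp.single_eq_of_ne' hxv.symm, add_zero,
        ← mul_assoc, ← mul_assoc, ((commute_pd v x).pow_right (a x)).eq]

lemma monDiff_add_single (a : Fin n →₀ ℕ) (v : Fin n) :
    monDiff (a + Finsupp.single v 1) = pd v * monDiff a :=
  list_prod_map_pd_pow_add_single a v (List.nodup_finRange n) (List.mem_finRange v)

lemma monDiff_single (v : Fin n) : monDiff (Finsupp.single v 1) = pd v := by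
  simpa [monDiff_zero] using monDiff_add_single 0 v

end Differentials

section Stresses

variable {n : ℕ} {Δ : Set (Finset (Fin n))} {γ : MvPolynomial (Fin n) ℝ}

lemma mem_tStress_iff :
    γ ∈ tStress Δ ↔ ∀ a : Fin n →₀ ℕ, a.support ∉ Δ → monDiff a γ = 0 := by
  simp only [tStress, Submodule.mem_iInf, LinearMap.mem_ker, Set.mem_ofPred_eq]

lemma pd_eq_zero_of_mem_tStress (hγ : γ ∈ tStress Δ) {v : Fin n} (hv : v ∉ verts Δ) :
    pd v γ = 0 := by
  rw [← monDiff_single]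
  exact mem_tStress_iff.mp hγ _ (by rwa [Finsupp.support_single v one_ne_zero])

lemma pd_mem_tStress_vStar (hΔ : IsComplex Δ) (hγ : γ ∈ tStress Δ) (v : Fin n) :
    pd v γ ∈ tStress (vStar Δ v) := by
  refine mem_tStress_iff.mpr fun a ha => ?_
  have hnonface : (a + Finsupp.single v 1).support ∉ Δ := by
    rw [Finsupp.support_add_eq_union, Finsupp.support_single v one_ne_zero,
      Finset.union_comm]
    exact fun hmem => ha ⟨hΔ _ hmem _ Finset.subset_union_right, hmem⟩
  have h := mem_tStress_iff.mp hγ _ hnonface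
  rwa [monDiff_add_single, (commute_pd_monDiff v a).eq] at h

lemma pd_mem_stressK_vStar {d k : ℕ} {V : Fin n → Fin d → ℝ} (hΔ : IsComplex Δ)
    (hγ : γ ∈ stressK V Δ (k + 1)) (v : Fin n) : pd v γ ∈ stressK V (vStar Δ v) k := by
  obtain ⟨⟨htilde, hcoord⟩, hhom⟩ := hγ
  refine ⟨⟨pd_mem_tStress_vStar hΔ htilde v, Submodule.mem_iInf _ |>.mpr fun j => ?_⟩, ?_⟩
  · have hj : coordDiff V j γ = 0 := Submodule.mem_iInf _ |>.mp hcoord j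
    rw [LinearMap.mem_ker, coordDiff, ← Module.End.mul_apply, (commute_linDiff_pd _ v).eq,
      Module.End.mul_apply, ← coordDiff, hj, map_zero]
  · exact (mem_homogeneousSubmodule _ _).mpr ((mem_homogeneousSubmodule _ _).mp hhom).pderiv

end Stresses

theorem stressVerts_linDiff_of_weaklyToricChordal {n d : ℕ} {V : Fin n → Fin d → ℝ}
    {Δ : Set (Finset (Fin n))} (hΔ : IsComplex Δ) {c : Fin n → ℝ} {k : ℕ}
    (h : WeaklyToricChordal V Δ (linDiff c) k) {γ : MvPolynomial (Fin n) ℝ}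
    (hγ : γ ∈ stressK V Δ (k + 1)) : stressVerts (linDiff c γ) = stressVerts γ := by
  ext v
  rw [stressVerts_eq_vars, stressVerts_eq_vars, mem_vars_iff_pderiv_ne_zero,
    mem_vars_iff_pderiv_ne_zero]
  change pd v (linDiff c γ) ≠ 0 ↔ pd v γ ≠ 0
  rw [← Module.End.mul_apply, ← (commute_linDiff_pd c v).eq, Module.End.mul_apply]
  refine ⟨fun hωγ hγv => hωγ (by rw [hγv, map_zero]), fun hγv hωγ => hγv ?_⟩
  have hv : v ∈ verts Δ := by_contra fun hv => hγv (pd_eq_zero_of_mem_tStress hγ.1.1 hv)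
  exact h v hv _ (pd_mem_stressK_vStar hΔ hγ v) hωγ

theorem stmt4 {n d : ℕ} (V : Fin n → Fin d → ℝ) (Δ : Set (Finset (Fin n)))
    (hΔ : IsComplex Δ) (c : Fin n → ℝ) (k : ℕ)
    (h : WeaklyToricChordal V Δ (linDiff c) k) :
    (∀ γ ∈ stressK V Δ (k + 1), stressVerts (linDiff c γ) = stressVerts γ) ∧
    (∀ γ ∈ stressK V Δ (k + 1), linDiff c γ = 0 → γ = 0) := by
  have hverts : ∀ γ ∈ stressK V Δ (k + 1), stressVerts (linDiff c γ) = stressVerts γ :=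
    fun γ hγ => stressVerts_linDiff_of_weaklyToricChordal hΔ h hγ
  refine ⟨hverts, fun γ hγ hωγ => ?_⟩
  have hvars : γ.vars = ∅ := by
    rw [← stressVerts_eq_vars, ← hverts γ hγ, hωγ, stressVerts_eq_vars, vars_0]
  exact ((mem_homogeneousSubmodule _ _).mp hγ.2).eq_zero_of_vars_eq_empty k.succ_ne_zero hvars
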